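/- arXiv:2104.00463 — 3 statements merged into one kernel-verified Lean document; each statement's English description precedes it below -/
import Mathlib

section
/- For all real numbers a and b, |a+b|·log(log(|a+b|+e)) ≤ |a|·log(log(2|a|+e)) + |b|·log(log(2|b|+e)). -/
/-! With `f t = t * log (log (t + e))`, the left side is `f |a+b|` and the right side is
`(f (2|a|) + f (2|b|)) / 2`. Since `f` is increasing on `[0, ∞)`, the triangle inequality gives
`f |a+b| ≤ f (|a| + |b|)`; since `f` is convex there (its second derivative is
`(t (L - 1) + 2eL) / ((t + e) L)²` with `L = log (t + e) ≥ 1`) and `|a| + |b|` is the midpoint of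
`2|a|` and `2|b|`, this is at most `(f (2|a|) + f (2|b|)) / 2`. -/

open Real Set

noncomputable def mulLogLog (t : ℝ) : ℝ := t * log (log (t + exp 1))

lemma one_le_log_add_exp_one {t : ℝ} (ht : 0 ≤ t) : 1 ≤ log (t + exp 1) := by
  rw [le_log_iff_exp_le (by positivity)]
  linarith

section Derivatives

variable {t : ℝ}

lemma hasDerivAt_log_add_exp_one (ht : t + exp 1 ≠ 0) :
    HasDerivAt (fun s => log (s + exp 1)) (t + exp 1)⁻¹ t := by
  simpa using ((hasDerivAt_id t).add_const (exp 1)).log ht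

lemma hasDerivAt_log_log_add_exp_one (hL : log (t + exp 1) ≠ 0) :
    HasDerivAt (fun s => log (log (s + exp 1))) ((t + exp 1) * log (t + exp 1))⁻¹ t := by
  have hP : t + exp 1 ≠ 0 := fun h => hL (by rw [h, log_zero])
  convert (hasDerivAt_log_add_exp_one hP).log hL using 1
  rw [mul_inv, div_eq_mul_inv]

lemma hasDerivAt_inv_mul_log_add_exp_one (hL : log (t + exp 1) ≠ 0) :
    HasDerivAt (fun s => ((s + exp 1) * log (s + exp 1))⁻¹)
      (-(log (t + exp 1) + 1) / ((t + exp 1) * log (t + exp 1)) ^ 2) t := by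
  have hP : t + exp 1 ≠ 0 := fun h => hL (by rw [h, log_zero])
  have hprod : HasDerivAt (fun s => (s + exp 1) * log (s + exp 1)) (log (t + exp 1) + 1) t := by
    refine (((hasDerivAt_id' t).add_const (exp 1)).mul
      (hasDerivAt_log_add_exp_one hP)).congr_deriv ?_
    rw [one_mul, mul_inv_cancel₀ hP]
  exact hprod.inv (mul_ne_zero hP hL)

lemma hasDerivAt_mulLogLog (hL : log (t + exp 1) ≠ 0) :
    HasDerivAt mulLogLog (log (log (t + exp 1)) + t * ((t + exp 1) * log (t + exp 1))⁻¹) t := by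
  refine ((hasDerivAt_id' t).mul (hasDerivAt_log_log_add_exp_one hL)).congr_deriv ?_
  rw [one_mul]

lemma hasDerivAt_deriv_mulLogLog (hL : log (t + exp 1) ≠ 0) :
    HasDerivAt (fun s => log (log (s + exp 1)) + s * ((s + exp 1) * log (s + exp 1))⁻¹)
      ((t * (log (t + exp 1) - 1) + 2 * exp 1 * log (t + exp 1)) /
        ((t + exp 1) * log (t + exp 1)) ^ 2) t := by
  have hP : t + exp 1 ≠ 0 := fun h => hL (by rw [h, log_zero])
  refine ((hasDerivAt_log_log_add_exp_one hL).add
    ((hasDerivAt_id' t).mul (hasDerivAt_inv_mul_log_add_exp_one hL))).congr_deriv ?_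
  field_simp
  ring

end Derivatives

lemma convexOn_mulLogLog : ConvexOn ℝ (Ici 0) mulLogLog := by
  have hL {t : ℝ} (ht : 0 ≤ t) : log (t + exp 1) ≠ 0 :=
    (zero_lt_one.trans_le (one_le_log_add_exp_one ht)).ne'
  refine convexOn_of_hasDerivWithinAt2_nonneg (convex_Ici 0)
    (fun t ht => (hasDerivAt_mulLogLog (hL ht)).continuousAt.continuousWithinAt)
    (fun t ht => (hasDerivAt_mulLogLog (hL (interior_subset ht))).hasDerivWithinAt)
    (fun t ht => (hasDerivAt_deriv_mulLogLog (hL (interior_subset ht))).hasDerivWithinAt) ?_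
  rw [interior_Ici]
  intro t ht
  have hlog := one_le_log_add_exp_one (le_of_lt ht)
  have hnum : 0 ≤ t * (log (t + exp 1) - 1) + 2 * exp 1 * log (t + exp 1) :=
    add_nonneg (mul_nonneg ht.le (by linarith)) (by positivity)
  exact div_nonneg hnum (sq_nonneg _)

lemma monotoneOn_mulLogLog : MonotoneOn mulLogLog (Ici 0) := by
  intro s (hs : 0 ≤ s) t (ht : 0 ≤ t) hst
  have hlog := one_le_log_add_exp_one hs
  exact mul_le_mul hst (log_le_log (by linarith) (log_le_log (by positivity) (by linarith)))
    (log_nonneg hlog) ht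

lemma mulLogLog_add_le {x y : ℝ} (hx : 0 ≤ x) (hy : 0 ≤ y) :
    mulLogLog (x + y) ≤ (mulLogLog (2 * x) + mulLogLog (2 * y)) / 2 := by
  have h := convexOn_mulLogLog.2 (mem_Ici.2 (by positivity : (0 : ℝ) ≤ 2 * x))
    (mem_Ici.2 (by positivity : (0 : ℝ) ≤ 2 * y)) (by norm_num : (0 : ℝ) ≤ 1 / 2)
    (by norm_num : (0 : ℝ) ≤ 1 / 2) (by norm_num)
  simp only [smul_eq_mul] at h
  rw [show 1 / 2 * (2 * x) + 1 / 2 * (2 * y) = x + y by ring] at h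
  linarith

/-- For all real `a`, `b`,
`|a+b|·log(log(|a+b|+e)) ≤ |a|·log(log(2|a|+e)) + |b|·log(log(2|b|+e))`. -/
theorem abs_mul_log_log_add_le (a b : ℝ) :
    |a + b| * Real.log (Real.log (|a + b| + Real.exp 1)) ≤
      |a| * Real.log (Real.log (2 * |a| + Real.exp 1)) +
        |b| * Real.log (Real.log (2 * |b| + Real.exp 1)) := by
  calc |a + b| * log (log (|a + b| + exp 1)) = mulLogLog |a + b| := rfl
    _ ≤ mulLogLog (|a| + |b|) :=
      monotoneOn_mulLogLog (mem_Ici.2 (abs_nonneg _)) (mem_Ici.2 (by positivity)) (abs_add_le a b)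
    _ ≤ (mulLogLog (2 * |a|) + mulLogLog (2 * |b|)) / 2 :=
      mulLogLog_add_le (abs_nonneg a) (abs_nonneg b)
    _ = _ := by simp only [mulLogLog]; ring
end

section
/- Let G : ℝ → ℝ be measurable and for ε > 0 define the averaging operator (𝓐_ε G)(X) := (1/ε)·∫_X^{X+ε} G(s) ds. Then for every ε ∈ (0,1), ∫_ℝ (1+|X|)·(𝓐_ε G)(X)² dX ≤ (3/2)·∫_ℝ (1+|s|)·G(s)² ds. -/
/-!
By Cauchy–Schwarz, `(𝓐_ε G)(X)² ≤ ε⁻¹ ∫_X^{X+ε} G²`. Integrating against the weight `1 + |X|`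
and swapping the order of integration (Tonelli) leaves `∫ G(s)² · ε⁻¹ ∫_{s-ε}^s (1 + |X|) dX ds`,
and the inner average is at most `(1 + |s|) + ε/2 ≤ (3/2)(1 + |s|)` because `ε < 1 ≤ 1 + |s|`.
-/

open MeasureTheory Set
open scoped ENNReal

section

variable {α β : Type*} [MeasurableSpace α] [MeasurableSpace β]

theorem sq_lintegral_le_measure_univ_mul_lintegral_sq {μ : Measure α} {f : α → ℝ≥0∞}
    (hf : AEMeasurable f μ) : (∫⁻ a, f a ∂μ) ^ 2 ≤ μ univ * ∫⁻ a, f a ^ 2 ∂μ := by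
  have h := ENNReal.lintegral_mul_le_Lp_mul_Lq μ Real.HolderConjugate.two_two hf
    (aemeasurable_const (b := (1 : ℝ≥0∞)))
  simp only [Pi.mul_apply, mul_one, ENNReal.one_rpow, lintegral_const, one_mul] at h
  calc (∫⁻ a, f a ∂μ) ^ 2
      ≤ ((∫⁻ a, f a ^ (2 : ℝ) ∂μ) ^ (1 / 2 : ℝ) * μ univ ^ (1 / 2 : ℝ)) ^ 2 := by gcongr
    _ = μ univ * ∫⁻ a, f a ^ 2 ∂μ := by
      rw [mul_pow, ← ENNReal.rpow_mul_natCast, ← ENNReal.rpow_mul_natCast]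
      norm_num [mul_comm]

theorem ofReal_sq_integral_le_measure_univ_mul {μ : Measure α} {f : α → ℝ}
    (hf : AEMeasurable f μ) :
    ENNReal.ofReal ((∫ a, f a ∂μ) ^ 2) ≤ μ univ * ∫⁻ a, ENNReal.ofReal (f a ^ 2) ∂μ := by
  have enorm_sq : ∀ x : ℝ, ‖x‖ₑ ^ 2 = ENNReal.ofReal (x ^ 2) := fun x => by
    rw [Real.enorm_eq_ofReal_abs, ← ENNReal.ofReal_pow (abs_nonneg x), sq_abs]
  simp only [← enorm_sq]
  calc ‖∫ a, f a ∂μ‖ₑ ^ 2 ≤ (∫⁻ a, ‖f a‖ₑ ∂μ) ^ 2 := by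
        gcongr; exact enorm_integral_le_lintegral_enorm f
    _ ≤ μ univ * ∫⁻ a, ‖f a‖ₑ ^ 2 ∂μ :=
        sq_lintegral_le_measure_univ_mul_lintegral_sq hf.enorm

theorem lintegral_mul_setLIntegral_preimage_comm {μ : Measure α} {ν : Measure β}
    [SFinite μ] [SFinite ν] {S : Set (α × β)} (hS : MeasurableSet S)
    {w : α → ℝ≥0∞} {g : β → ℝ≥0∞} (hw : Measurable w) (hg : Measurable g) :
    ∫⁻ x, w x * ∫⁻ y in Prod.mk x ⁻¹' S, g y ∂ν ∂μ =
      ∫⁻ y, g y * ∫⁻ x in (·, y) ⁻¹' S, w x ∂μ ∂ν := by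
  set F : α → β → ℝ≥0∞ := fun x y => S.indicator (fun p => w p.1 * g p.2) (x, y)
  have hF : Measurable (Function.uncurry F) :=
    ((hw.comp measurable_fst).mul (hg.comp measurable_snd)).indicator hS
  have left : ∀ x, w x * ∫⁻ y in Prod.mk x ⁻¹' S, g y ∂ν = ∫⁻ y, F x y ∂ν := fun x => by
    rw [← lintegral_const_mul _ hg, ← lintegral_indicator (measurable_prodMk_left hS)]
    rfl
  have right : ∀ y, g y * ∫⁻ x in (·, y) ⁻¹' S, w x ∂μ = ∫⁻ x, F x y ∂μ := fun y => by
    rw [mul_comm, ← lintegral_mul_const _ hw, ← lintegral_indicator (measurable_prodMk_right hS)]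
    rfl
  simp only [left, right]
  exact lintegral_lintegral_swap hF.aemeasurable

end

theorem lintegral_mul_setLIntegral_Ioc_comm (ε : ℝ) {w g : ℝ → ℝ≥0∞} (hw : Measurable w)
    (hg : Measurable g) :
    ∫⁻ x, w x * ∫⁻ y in Ioc x (x + ε), g y = ∫⁻ y, g y * ∫⁻ x in Ico (y - ε) y, w x := by
  set window : Set (ℝ × ℝ) := {p | p.1 < p.2 ∧ p.2 ≤ p.1 + ε}
  have hwindow : MeasurableSet window :=
    (measurableSet_lt measurable_fst measurable_snd).inter
      (measurableSet_le measurable_snd (measurable_fst.add_const ε))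
  have window_section : ∀ y, (·, y) ⁻¹' window = Ico (y - ε) y := fun y => by
    ext x
    simp only [window, mem_preimage, mem_Ico]
    constructor <;> rintro ⟨h₁, h₂⟩ <;> constructor <;> linarith
  have swap := lintegral_mul_setLIntegral_preimage_comm (μ := volume) (ν := volume) hwindow hw hg
  simp only [window_section] at swap
  exact swap

theorem ofReal_sq_average_le {f : ℝ → ℝ} (hf : Measurable f) {ε : ℝ} (hε : 0 < ε) (x : ℝ) :
    ENNReal.ofReal ((ε⁻¹ * ∫ t in x..x + ε, f t) ^ 2) ≤
      ENNReal.ofReal ε⁻¹ * ∫⁻ t in Ioc x (x + ε), ENNReal.ofReal (f t ^ 2) := by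
  have h := ofReal_sq_integral_le_measure_univ_mul (μ := volume.restrict (Ioc x (x + ε)))
    hf.aemeasurable
  rw [Measure.restrict_apply_univ, Real.volume_Ioc, add_sub_cancel_left] at h
  rw [intervalIntegral.integral_of_le (by linarith), mul_pow,
    ENNReal.ofReal_mul (by positivity)]
  calc ENNReal.ofReal (ε⁻¹ ^ 2) * ENNReal.ofReal ((∫ t in Ioc x (x + ε), f t) ^ 2)
      ≤ ENNReal.ofReal (ε⁻¹ ^ 2) * (ENNReal.ofReal ε *
          ∫⁻ t in Ioc x (x + ε), ENNReal.ofReal (f t ^ 2)) := by gcongr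
    _ = _ := by
      rw [← mul_assoc, ← ENNReal.ofReal_mul (by positivity), sq, mul_assoc,
        inv_mul_cancel₀ hε.ne', mul_one]

theorem intervalIntegral_one_add_abs_le {ε : ℝ} (hε0 : 0 ≤ ε) (hε1 : ε ≤ 1) (s : ℝ) :
    ∫ x in (s - ε)..s, (1 + |x|) ≤ 3 / 2 * ε * (1 + |s|) := by
  have hle : s - ε ≤ s := by linarith
  have abs_le : ∀ x ∈ Icc (s - ε) s, 1 + |x| ≤ 1 + |s| + (s - x) := fun x hx => by
    have := abs_sub_abs_le_abs_sub x s
    rw [abs_sub_comm, abs_of_nonneg (sub_nonneg.2 hx.2)] at this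
    linarith
  calc ∫ x in (s - ε)..s, (1 + |x|) ≤ ∫ x in (s - ε)..s, (1 + |s| + s - x) :=
        intervalIntegral.integral_mono_on hle
          ((by fun_prop : Continuous fun x : ℝ => 1 + |x|).intervalIntegrable _ _)
          ((by fun_prop : Continuous fun x : ℝ => 1 + |s| + s - x).intervalIntegrable _ _)
          fun x hx => by linarith [abs_le x hx]
    _ = ε * (1 + |s|) + ε ^ 2 / 2 := by
        rw [intervalIntegral.integral_sub intervalIntegrable_const
          intervalIntegral.intervalIntegrable_id, intervalIntegral.integral_const, integral_id,
          smul_eq_mul]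
        ring
    _ ≤ 3 / 2 * ε * (1 + |s|) := by nlinarith [abs_nonneg s]

theorem setLIntegral_Ico_one_add_abs_le {ε : ℝ} (hε0 : 0 ≤ ε) (hε1 : ε ≤ 1) (s : ℝ) :
    ∫⁻ x in Ico (s - ε) s, ENNReal.ofReal (1 + |x|) ≤ ENNReal.ofReal (3 / 2 * ε * (1 + |s|)) := by
  rw [← ofReal_integral_eq_lintegral_ofReal
      ((by fun_prop : Continuous fun x : ℝ => 1 + |x|).integrableOn_Icc.mono_set
        Ico_subset_Icc_self) (ae_of_all _ fun x => by positivity),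
    setIntegral_congr_set Ico_ae_eq_Ioc, ← intervalIntegral.integral_of_le (by linarith)]
  exact ENNReal.ofReal_le_ofReal (intervalIntegral_one_add_abs_le hε0 hε1 s)

/-- for measurable `G : ℝ → ℝ` and `ε ∈ (0,1)`, the sliding average
`(𝓐_ε G)(X) = ε⁻¹ ∫_X^{X+ε} G` satisfies
`∫ (1+|X|) (𝓐_ε G)(X)² dX ≤ (3/2) ∫ (1+|s|) G(s)² ds`,
where both sides are interpreted in `[0,∞]`. -/
theorem sliding_average_weighted_L2_bound (G : ℝ → ℝ) (hG : Measurable G)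
    (ε : ℝ) (hε : ε ∈ Set.Ioo (0 : ℝ) 1) :
    (∫⁻ X : ℝ, ENNReal.ofReal ((1 + |X|) * (ε⁻¹ * ∫ s in X..(X + ε), G s) ^ 2)) ≤
      ENNReal.ofReal (3 / 2) * ∫⁻ s : ℝ, ENNReal.ofReal ((1 + |s|) * (G s) ^ 2) := by
  obtain ⟨hε0, hε1⟩ := hε
  set W : ℝ → ℝ≥0∞ := fun x => ENNReal.ofReal (1 + |x|)
  set g : ℝ → ℝ≥0∞ := fun s => ENNReal.ofReal (G s ^ 2)
  have hW : Measurable W := by fun_prop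
  have hg : Measurable g := by fun_prop
  calc (∫⁻ X : ℝ, ENNReal.ofReal ((1 + |X|) * (ε⁻¹ * ∫ s in X..(X + ε), G s) ^ 2))
      ≤ ∫⁻ X, ENNReal.ofReal ε⁻¹ * (W X * ∫⁻ s in Ioc X (X + ε), g s) := by
        refine lintegral_mono fun X => ?_
        rw [ENNReal.ofReal_mul (by positivity), mul_left_comm]
        gcongr
        exact ofReal_sq_average_le hG hε0 X
    _ = ENNReal.ofReal ε⁻¹ * ∫⁻ s, g s * ∫⁻ X in Ico (s - ε) s, W X := by
        rw [lintegral_const_mul' _ _ ENNReal.ofReal_ne_top,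
          lintegral_mul_setLIntegral_Ioc_comm ε hW hg]
    _ ≤ ENNReal.ofReal ε⁻¹ * ∫⁻ s, g s * ENNReal.ofReal (3 / 2 * ε * (1 + |s|)) := by
        gcongr with s
        exact setLIntegral_Ico_one_add_abs_le hε0.le hε1.le s
    _ = ENNReal.ofReal (3 / 2) * ∫⁻ s : ℝ, ENNReal.ofReal ((1 + |s|) * (G s) ^ 2) := by
        rw [← lintegral_const_mul' _ _ ENNReal.ofReal_ne_top,
          ← lintegral_const_mul' _ _ ENNReal.ofReal_ne_top]
        refine lintegral_congr fun s => ?_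
        simp only [g, ← ENNReal.ofReal_mul (by positivity : (0 : ℝ) ≤ G s ^ 2),
          ← ENNReal.ofReal_mul (by positivity : (0 : ℝ) ≤ ε⁻¹)]
        rw [← ENNReal.ofReal_mul (by norm_num)]
        congr 1
        field_simp
end

section
/- Let m, k : ℤ → ℝ satisfy 0 < a_m ≤ m(j) ≤ b_m and 0 < a_k ≤ k(j) ≤ b_k for all j. Let T > 0 and let η, ξ : ℝ → ℓ²(ℤ;ℝ) be continuously differentiable curves and ρ₁, ρ₂ : ℝ → ℓ²(ℤ;ℝ) be continuous, satisfying for all t and j: (d/dt)η(t)(j) = k(j)·[ξ(t)(j+1) − ξ(t)(j) + ρ₁(t)(j)] and (d/dt)ξ(t)(j) = [η(t)(j) − η(t)(j−1) + ρ₂(t)(j)]/m(j). Then there is a constant C depending only on a_k, b_k, a_m, b_m such that sup_{|t| ≤ T} (‖η(t)‖_{ℓ²}² + ‖ξ(t)‖_{ℓ²}²)^{1/2} ≤ C·(‖η(0)‖_{ℓ²}² + ‖ξ(0)‖_{ℓ²}²)^{1/2} + C·T·sup_{|t| ≤ T} (‖ρ₁(t)‖_{ℓ²}² + ‖ρ₂(t)‖_{ℓ²}²)^{1/2}.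 -/
/-!
The weighted energy `E = ∑ⱼ (ηⱼ² / kⱼ + mⱼ ξⱼ²)` is comparable to `‖η‖² + ‖ξ‖²`, with constants
`c₁ = min (1/b_k) a_m` and `c₂ = max (1/a_k) b_m`. Along a solution, summation by parts cancels
the difference terms, so `E' = 2 (⟪ρ₁, η⟫ + ⟪ρ₂, ξ⟫)`. By Cauchy–Schwarz this gives
`|(√E)'| ≤ S / √c₁`, and integrating from `0` to `t` yields the estimate.
-/

open Set Filter Topology
open scoped ENNReal lp RealInnerProductSpace

theorem summable_mul_of_summable_sq {ι : Type*} {f g : ι → ℝ} (hf : Summable fun i => f i ^ 2)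
    (hg : Summable fun i => g i ^ 2) : Summable fun i => f i * g i :=
  .of_norm_bounded ((hf.add hg).div_const 2) fun i => by
    rw [norm_mul, Real.norm_eq_abs, Real.norm_eq_abs, ← sq_abs (f i), ← sq_abs (g i)]
    linarith [two_mul_le_add_sq |f i| |g i|]

namespace lp

variable {α : Type*} {p : ℝ≥0∞} [Fact (1 ≤ p)] {a b : ℝ} {w : α → ℝ}

noncomputable def mulCLM (w : α → ℝ) (hw : ∀ i, w i ∈ Icc a b) : ℓ^p(α, ℝ) →L[ℝ] ℓ^p(α, ℝ) :=
  have hwB (i : α) : |w i| ≤ max |a| |b| := abs_le_max_abs_abs (hw i).1 (hw i).2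
  LinearMap.mkContinuous
    { toFun f := ⟨fun i => w i * f i, ((lp.memℓp f).norm.const_mul (max |a| |b|)).mono fun i => by
          rw [norm_mul]; gcongr; exact hwB i⟩
      map_add' f g := by ext i; exact mul_add (w i) (f i) (g i)
      map_smul' c f := by
        ext i; simp only [coeFn_smul, Pi.smul_apply, smul_eq_mul, Real.ringHom_apply]; ring }
    (max |a| |b|) fun f => by
      have hp : p ≠ 0 := (zero_lt_one.trans_le (Fact.out : 1 ≤ p)).ne'
      refine (lp.norm_mono hp (y := max |a| |b| • f) fun i => ?_).trans
        (norm_const_smul_le hp _ f |>.trans_eq ?_)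
      · simp only [LinearMap.coe_mk, AddHom.coe_mk, coeFn_smul, Pi.smul_apply, smul_eq_mul,
          norm_mul]
        gcongr
        exact (hwB i).trans (le_abs_self _)
      · rw [Real.norm_of_nonneg (le_max_of_le_left (abs_nonneg a))]

@[simp] lemma mulCLM_apply (hw : ∀ i, w i ∈ Icc a b) (f : ℓ^p(α, ℝ)) (i : α) :
    mulCLM w hw f i = w i * f i := rfl

lemma summable_sq (f : ℓ²(α, ℝ)) : Summable fun i => f i ^ 2 := by
  simpa [sq] using summable_inner (𝕜 := ℝ) f f

lemma hasSum_mul (f g : ℓ²(α, ℝ)) : HasSum (fun i => f i * g i) ⟪f, g⟫ := by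
  simpa [mul_comm] using hasSum_inner (𝕜 := ℝ) f g

lemma inner_mulCLM (hw : ∀ i, w i ∈ Icc a b) (f g : ℓ²(α, ℝ)) :
    ⟪mulCLM w hw f, g⟫ = ∑' i, w i * f i * g i :=
  (hasSum_mul (mulCLM w hw f) g).tsum_eq.symm

lemma isSymmetric_mulCLM (hw : ∀ i, w i ∈ Icc a b) :
    (mulCLM (p := 2) w hw : ℓ²(α, ℝ) →ₗ[ℝ] ℓ²(α, ℝ)).IsSymmetric := fun f g => by
  simp only [ContinuousLinearMap.coe_coe]
  rw [inner_mulCLM, real_inner_comm, inner_mulCLM]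
  exact tsum_congr fun i => by ring

lemma mul_norm_sq_le_inner_mulCLM_self (hw : ∀ i, w i ∈ Icc a b) (f : ℓ²(α, ℝ)) :
    a * ‖f‖ ^ 2 ≤ ⟪mulCLM w hw f, f⟫ := by
  rw [← real_inner_self_eq_norm_sq]
  refine hasSum_le (fun i => ?_) ((hasSum_mul f f).mul_left a) (hasSum_mul (mulCLM w hw f) f)
  rw [mulCLM_apply, mul_assoc]
  exact mul_le_mul_of_nonneg_right (hw i).1 (mul_self_nonneg _)

lemma inner_mulCLM_self_le_mul_norm_sq (hw : ∀ i, w i ∈ Icc a b) (f : ℓ²(α, ℝ)) :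
    ⟪mulCLM w hw f, f⟫ ≤ b * ‖f‖ ^ 2 := by
  rw [← real_inner_self_eq_norm_sq]
  refine hasSum_le (fun i => ?_) (hasSum_mul (mulCLM w hw f) f) ((hasSum_mul f f).mul_left b)
  rw [mulCLM_apply, mul_assoc]
  exact mul_le_mul_of_nonneg_right (hw i).2 (mul_self_nonneg _)

lemma summable_comp_add_mul (f g : ℓ²(ℤ, ℝ)) (n : ℤ) : Summable fun j => f (j + n) * g j :=
  summable_mul_of_summable_sq ((Equiv.addRight n).summable_iff.2 (summable_sq f)) (summable_sq g)

theorem tsum_fwdDiff_add_mul_add_tsum_bwdDiff_add_mul (a b r q : ℓ²(ℤ, ℝ)) :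
    ∑' j, (b (j + 1) - b j + r j) * a j + ∑' j, (a j - a (j - 1) + q j) * b j =
      ⟪r, a⟫ + ⟪q, b⟫ := by
  have hba := (summable_comp_add_mul b a 1).hasSum
  have hab : HasSum (fun j => a (j - 1) * b j) (∑' j, a (j - 1) * b j) := by
    simpa only [sub_eq_add_neg] using (summable_comp_add_mul a b (-1)).hasSum
  have hshift : ∑' j, a (j - 1) * b j = ∑' j, b (j + 1) * a j := by
    rw [← (Equiv.addRight 1).tsum_eq]; simp [mul_comm]
  have h₁ := ((hba.sub (hasSum_mul b a)).add (hasSum_mul r a)).tsum_eq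
  have h₂ := (((hasSum_mul a b).sub hab).add (hasSum_mul q b)).tsum_eq
  simp only [← sub_mul, ← add_mul] at h₁ h₂
  rw [h₁, h₂, hshift, real_inner_comm a b]
  ring

end lp

theorem HasDerivAt.inner_apply_self {E : Type*} [NormedAddCommGroup E] [InnerProductSpace ℝ E]
    {A : E →L[ℝ] E} (hA : (A : E →ₗ[ℝ] E).IsSymmetric) {u : ℝ → E} {u' : E} {t : ℝ}
    (hu : HasDerivAt u u' t) : HasDerivAt (fun s => ⟪A (u s), u s⟫) (2 * ⟪A u', u t⟫) t := by
  refine ((A.hasFDerivAt.comp_hasDerivAt t hu).inner ℝ hu).congr_deriv ?_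
  rw [two_mul, real_inner_comm]
  exact congrArg (· + _) (hA u' (u t)).symm

theorem abs_inner_add_inner_le {E : Type*} [NormedAddCommGroup E] [InnerProductSpace ℝ E]
    (x₁ x₂ y₁ y₂ : E) :
    |⟪x₁, y₁⟫ + ⟪x₂, y₂⟫| ≤ √(‖x₁‖ ^ 2 + ‖x₂‖ ^ 2) * √(‖y₁‖ ^ 2 + ‖y₂‖ ^ 2) :=
  calc |⟪x₁, y₁⟫ + ⟪x₂, y₂⟫| ≤ ‖x₁‖ * ‖y₁‖ + ‖x₂‖ * ‖y₂‖ :=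
        (abs_add_le _ _).trans (add_le_add (abs_real_inner_le_norm _ _) (abs_real_inner_le_norm _ _))
    _ ≤ _ := by
        simpa [Fin.sum_univ_two] using
          Real.sum_mul_le_sqrt_mul_sqrt Finset.univ ![‖x₁‖, ‖x₂‖] ![‖y₁‖, ‖y₂‖]

theorem sqrt_le_sqrt_add_mul_of_abs_deriv_le {s : Set ℝ} (hs : Convex ℝ s) {E E' : ℝ → ℝ}
    {K x y : ℝ} (hK : 0 ≤ K) (hE : ∀ z ∈ s, 0 ≤ E z)
    (hE' : ∀ z ∈ s, HasDerivWithinAt E (E' z) s z)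
    (hbound : ∀ z ∈ s, |E' z| ≤ 2 * K * √(E z)) (hx : x ∈ s) (hy : y ∈ s) :
    √(E y) ≤ √(E x) + K * |y - x| := by
  -- `√E` need not be differentiable where `E` vanishes, so we work with `√(E + ε)`.
  have hε : ∀ ε > 0, √(E y) ≤ √(E x + ε) + K * |y - x| := by
    intro ε hε
    have hEε : ∀ z ∈ s, 0 < E z + ε := fun z hz => by linarith [hE z hz]
    have hpos : ∀ z ∈ s, 0 < 2 * √(E z + ε) := fun z hz => by
      have := Real.sqrt_pos.2 (hEε z hz); positivity
    have hderiv : ∀ z ∈ s, HasDerivWithinAt (fun z => √(E z + ε))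
        (E' z / (2 * √(E z + ε))) s z := fun z hz =>
      ((hE' z hz).add_const ε).sqrt (hEε z hz).ne'
    have hK' : ∀ z ∈ s, ‖E' z / (2 * √(E z + ε))‖ ≤ K := fun z hz => by
      rw [Real.norm_eq_abs, abs_div, abs_of_pos (hpos z hz), div_le_iff₀ (hpos z hz)]
      calc |E' z| ≤ 2 * K * √(E z) := hbound z hz
        _ ≤ 2 * K * √(E z + ε) := by gcongr; linarith
        _ = K * (2 * √(E z + ε)) := by ring
    have hmvt := hs.norm_image_sub_le_of_norm_hasDerivWithin_le hderiv hK' hx hy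
    rw [Real.norm_eq_abs, Real.norm_eq_abs] at hmvt
    calc √(E y) ≤ √(E y + ε) := Real.sqrt_le_sqrt (by linarith)
      _ ≤ √(E x + ε) + K * |y - x| := by linarith [(le_abs_self _).trans hmvt]
  have hlim : Tendsto (fun ε => √(E x + ε) + K * |y - x|) (𝓝[>] 0)
      (𝓝 (√(E x) + K * |y - x|)) := by
    have : Continuous fun ε => √(E x + ε) + K * |y - x| := by fun_prop
    simpa using (this.tendsto 0).mono_left nhdsWithin_le_nhds
  exact ge_of_tendsto hlim (eventually_nhdsWithin_of_forall hε)

theorem le_sqrt_div_mul_add_of_energy {E E' N : ℝ → ℝ} {c₁ c₂ S T t : ℝ} (hc₁ : 0 < c₁)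
    (hS : 0 ≤ S) (hN : ∀ s, 0 ≤ N s) (hlow : ∀ s, c₁ * N s ^ 2 ≤ E s)
    (hE₀ : E 0 ≤ c₂ * N 0 ^ 2) (hE' : ∀ s, HasDerivAt E (E' s) s)
    (hflux : ∀ s, |s| ≤ T → |E' s| ≤ 2 * S * N s) (ht : |t| ≤ T) :
    N t ≤ √(c₂ / c₁) * N 0 + c₁⁻¹ * T * S := by
  have hc₁' : 0 < √c₁ := Real.sqrt_pos.2 hc₁
  have hNE (s : ℝ) : N s ≤ √(E s) / √c₁ := by
    rw [le_div_iff₀ hc₁', ← Real.sqrt_sq (hN s), ← Real.sqrt_mul (sq_nonneg _)]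
    exact Real.sqrt_le_sqrt (by linarith [hlow s])
  have hsqrt : √(E t) ≤ √(E 0) + S / √c₁ * |t - 0| := by
    refine sqrt_le_sqrt_add_mul_of_abs_deriv_le (convex_Icc (-T) T) (by positivity)
      (fun s _ => (mul_nonneg hc₁.le (sq_nonneg _)).trans (hlow s))
      (fun s _ => (hE' s).hasDerivWithinAt) (fun s hs => ?_)
      (by simpa using (abs_nonneg t).trans ht) (abs_le.1 ht)
    calc |E' s| ≤ 2 * S * N s := hflux s (abs_le.2 hs)
      _ ≤ 2 * S * (√(E s) / √c₁) := by gcongr; exact hNE s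
      _ = 2 * (S / √c₁) * √(E s) := by ring
  have hE₀' : √(E 0) ≤ √c₂ * N 0 := by
    rw [← Real.sqrt_sq (hN 0), ← Real.sqrt_mul' _ (sq_nonneg _)]
    exact Real.sqrt_le_sqrt hE₀
  calc N t ≤ √(E t) / √c₁ := hNE t
    _ ≤ (√c₂ * N 0 + S / √c₁ * T) / √c₁ := by
      gcongr
      refine hsqrt.trans (add_le_add hE₀' ?_)
      gcongr
      simpa using ht
    _ = √(c₂ / c₁) * N 0 + c₁⁻¹ * T * S := by
      rw [Real.sqrt_div' _ hc₁.le]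
      field_simp
      linear_combination (-(S * T)) * Real.mul_self_sqrt hc₁.le

lemma inv_mem_Icc_inv {a b x : ℝ} (ha : 0 < a) (hx : x ∈ Icc a b) : x⁻¹ ∈ Icc b⁻¹ a⁻¹ :=
  ⟨inv_anti₀ (ha.trans_le hx.1) hx.2, inv_anti₀ ha hx.1⟩

/-- Twice the energy `H` of the paper. -/
noncomputable def chainEnergy (m k : ℤ → ℝ) (η ξ : ℓ²(ℤ, ℝ)) : ℝ :=
  ∑' j, (η j ^ 2 / k j + m j * ξ j ^ 2)

section chainEnergy

variable {m k : ℤ → ℝ} {am bm ak bk : ℝ}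

lemma chainEnergy_eq_inner (hak : 0 < ak) (hk : ∀ j, k j ∈ Icc ak bk)
    (hm : ∀ j, m j ∈ Icc am bm) (η ξ : ℓ²(ℤ, ℝ)) :
    chainEnergy m k η ξ =
      ⟪lp.mulCLM (fun j => (k j)⁻¹) (fun j => inv_mem_Icc_inv hak (hk j)) η, η⟫ +
        ⟪lp.mulCLM m hm ξ, ξ⟫ := by
  rw [← ((lp.hasSum_mul _ η).add (lp.hasSum_mul _ ξ)).tsum_eq, chainEnergy]
  exact tsum_congr fun j => by simp only [lp.mulCLM_apply]; ring

lemma min_mul_le_chainEnergy (hak : 0 < ak) (hk : ∀ j, k j ∈ Icc ak bk)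
    (hm : ∀ j, m j ∈ Icc am bm) (η ξ : ℓ²(ℤ, ℝ)) :
    min bk⁻¹ am * (‖η‖ ^ 2 + ‖ξ‖ ^ 2) ≤ chainEnergy m k η ξ := by
  rw [chainEnergy_eq_inner hak hk hm]
  have := lp.mul_norm_sq_le_inner_mulCLM_self (fun j => inv_mem_Icc_inv hak (hk j)) η
  have := lp.mul_norm_sq_le_inner_mulCLM_self hm ξ
  nlinarith [min_le_left bk⁻¹ am, min_le_right bk⁻¹ am, sq_nonneg ‖η‖, sq_nonneg ‖ξ‖]

lemma chainEnergy_le_max_mul (hak : 0 < ak) (hk : ∀ j, k j ∈ Icc ak bk)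
    (hm : ∀ j, m j ∈ Icc am bm) (η ξ : ℓ²(ℤ, ℝ)) :
    chainEnergy m k η ξ ≤ max ak⁻¹ bm * (‖η‖ ^ 2 + ‖ξ‖ ^ 2) := by
  rw [chainEnergy_eq_inner hak hk hm]
  have := lp.inner_mulCLM_self_le_mul_norm_sq (fun j => inv_mem_Icc_inv hak (hk j)) η
  have := lp.inner_mulCLM_self_le_mul_norm_sq hm ξ
  nlinarith [le_max_left ak⁻¹ bm, le_max_right ak⁻¹ bm, sq_nonneg ‖η‖, sq_nonneg ‖ξ‖]

theorem hasDerivAt_chainEnergy (hak : 0 < ak) (ham : 0 < am) (hk : ∀ j, k j ∈ Icc ak bk)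
    (hm : ∀ j, m j ∈ Icc am bm) {η ξ : ℝ → ℓ²(ℤ, ℝ)} {η' ξ' r q : ℓ²(ℤ, ℝ)} {t : ℝ}
    (hη : HasDerivAt η η' t) (hξ : HasDerivAt ξ ξ' t)
    (hη' : ∀ j, η' j = k j * (ξ t (j + 1) - ξ t j + r j))
    (hξ' : ∀ j, ξ' j = (η t j - η t (j - 1) + q j) / m j) :
    HasDerivAt (fun s => chainEnergy m k (η s) (ξ s)) (2 * (⟪r, η t⟫ + ⟪q, ξ t⟫)) t := by
  simp only [chainEnergy_eq_inner hak hk hm]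
  refine ((hη.inner_apply_self (lp.isSymmetric_mulCLM _)).add
    (hξ.inner_apply_self (lp.isSymmetric_mulCLM hm))).congr_deriv ?_
  rw [lp.inner_mulCLM, lp.inner_mulCLM, ← lp.tsum_fwdDiff_add_mul_add_tsum_bwdDiff_add_mul,
    mul_add]
  congr 2 <;> refine tsum_congr fun j => ?_
  · have := (hak.trans_le (hk j).1).ne'
    simp only [hη']
    field_simp
  · have := (ham.trans_le (hm j).1).ne'
    simp only [hξ']
    field_simp

end chainEnergy

/-- the energy estimate.  For coefficients `0 < a_m ≤ m(j) ≤ b_m`,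
`0 < a_k ≤ k(j) ≤ b_k`, there is a constant `C` depending only on `a_k, b_k, a_m, b_m`
such that any `C¹` curves `η, ξ : ℝ → ℓ²(ℤ)` and continuous `ρ₁, ρ₂ : ℝ → ℓ²(ℤ)`
satisfying `η' = k (δ⁺ξ + ρ₁)` and `ξ' = (δ⁻η + ρ₂)/m` componentwise obey
`sup_{|t| ≤ T} ‖(η,ξ)(t)‖ ≤ C ‖(η,ξ)(0)‖ + C T sup_{|t| ≤ T} ‖(ρ₁,ρ₂)(t)‖`. -/
theorem energy_estimate (am bm ak bk : ℝ) (ham : 0 < am) (hak : 0 < ak) :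
    ∃ C : ℝ, 0 < C ∧
      ∀ m k : ℤ → ℝ,
        (∀ j, m j ∈ Set.Icc am bm) → (∀ j, k j ∈ Set.Icc ak bk) →
        ∀ T : ℝ, 0 < T →
        ∀ η ξ ρ₁ ρ₂ : ℝ → lp (fun _ : ℤ => ℝ) 2,
          ContDiff ℝ 1 η → ContDiff ℝ 1 ξ → Continuous ρ₁ → Continuous ρ₂ →
          (∀ (t : ℝ) (j : ℤ), (deriv η t) j =
            k j * ((ξ t) (j + 1) - (ξ t) j +
              (ρ₁ t) j)) →
          (∀ (t : ℝ) (j : ℤ), (deriv ξ t) j =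
            ((η t) j - (η t) (j - 1) +
              (ρ₂ t) j) / m j) →
          ∀ S : ℝ,
            (∀ t : ℝ, |t| ≤ T → Real.sqrt (‖ρ₁ t‖ ^ 2 + ‖ρ₂ t‖ ^ 2) ≤ S) →
            ∀ t : ℝ, |t| ≤ T →
              Real.sqrt (‖η t‖ ^ 2 + ‖ξ t‖ ^ 2) ≤
                C * Real.sqrt (‖η 0‖ ^ 2 + ‖ξ 0‖ ^ 2) + C * T * S := by
  set c₁ := min bk⁻¹ am
  set c₂ := max ak⁻¹ bm
  refine ⟨max 1 (max √(c₂ / c₁) c₁⁻¹), lt_max_of_lt_left one_pos, ?_⟩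
  intro m k hm hk T hT η ξ ρ₁ ρ₂ hη hξ _ _ hη' hξ' S hS t ht
  have hc₁ : 0 < c₁ := lt_min (inv_pos.2 (hak.trans_le ((hk 0).1.trans (hk 0).2))) ham
  have hS₀ : 0 ≤ S := (Real.sqrt_nonneg _).trans (hS 0 (by simpa using hT.le))
  have hderiv (s : ℝ) := hasDerivAt_chainEnergy hak ham hk hm
    (hη.differentiable one_ne_zero s).hasDerivAt (hξ.differentiable one_ne_zero s).hasDerivAt
    (hη' s) (hξ' s)
  have hbound := le_sqrt_div_mul_add_of_energy (N := fun s => √(‖η s‖ ^ 2 + ‖ξ s‖ ^ 2))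
    (c₂ := c₂) hc₁ hS₀ (fun _ => Real.sqrt_nonneg _)
    (fun s => by rw [Real.sq_sqrt (by positivity)]; exact min_mul_le_chainEnergy hak hk hm _ _)
    (by rw [Real.sq_sqrt (by positivity)]; exact chainEnergy_le_max_mul hak hk hm _ _)
    hderiv (fun s hs => ?_) ht
  · refine hbound.trans ?_
    gcongr
    exacts [le_max_of_le_right (le_max_left _ _), le_max_of_le_right (le_max_right _ _)]
  · rw [abs_mul, abs_two, mul_assoc]
    gcongr
    exact (abs_inner_add_inner_le _ _ _ _).trans (by gcongr; exact hS s hs)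
end
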